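/- Let K = (S, →, AP, 𝓛) be a Kripke structure, s a state of K, and p ∈ AP an atomic proposition. Then K,s ⊨ p if and only if lts(K), s ⊨ ∃(X_F X_p true). -/
import Mathlib


/-!
Statement 3: the atomic case of the truth-preservation theorem for the mapping `lts`
from CTL* to ACTL*: `K,s ⊨ p` iff `lts(K), s ⊨ ∃(X_F X_p true)`.

In `lts(K)` the transitions are labelled by sets of atomic actions (`∅`, `{F}` and
`𝓛(s)`), and the action-indexed next operator `X_a` holds on a path iff the action `a`
belongs to the label of its first transition.
-/

namespace Stmt3

/-- A path in a labelled transition system with transition relation `Tr ⊆ S × Act × S`. -/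
structure LPath {S Act : Type} (Tr : S → Act → S → Prop) where
  states : ℕ → S
  acts : ℕ → Act
  valid : ∀ n, Tr (states n) (acts n) (states (n + 1))

/-- The suffix of a path, starting at position `k`. -/
def LPath.suffix {S Act : Type} {Tr : S → Act → S → Prop} (σ : LPath Tr) (k : ℕ) :
    LPath Tr where
  states n := σ.states (n + k)
  acts n := σ.acts (n + k)
  valid n := by
    have h := σ.valid (n + k)
    rwa [show n + k + 1 = n + 1 + k by omega] at h

/-- A path in a Kripke structure with transition relation `R ⊆ S × S`. -/
structure KPath {S : Type} (R : S → S → Prop) where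
  states : ℕ → S
  valid : ∀ n, R (states n) (states (n + 1))

/-- The suffix of a path in a Kripke structure, starting at position `k`. -/
def KPath.suffix {S : Type} {R : S → S → Prop} (σ : KPath R) (k : ℕ) : KPath R where
  states n := σ.states (n + k)
  valid n := by
    have h := σ.valid (n + k)
    rwa [show n + k + 1 = n + 1 + k by omega] at h

mutual
/-- CTL* state formulas over atomic propositions `AP`. -/
inductive CSF (AP : Type) : Type
  | tt : CSF AP
  | atom : AP → CSF AP
  | neg : CSF AP → CSF AP
  | and : CSF AP → CSF AP → CSF AP
  | ex : CPF AP → CSF AP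

/-- CTL* path formulas over atomic propositions `AP`. -/
inductive CPF (AP : Type) : Type
  | state : CSF AP → CPF AP
  | neg : CPF AP → CPF AP
  | and : CPF AP → CPF AP → CPF AP
  | next : CPF AP → CPF AP
  | unt : CPF AP → CPF AP → CPF AP
end

mutual
/-- Satisfaction of CTL* state formulas at a state of a Kripke structure. -/
def csatS {S AP : Type} (R : S → S → Prop) (Lab : S → Set AP) : CSF AP → S → Prop
  | .tt, _ => True
  | .atom p, s => p ∈ Lab s
  | .neg φ, s => ¬ csatS R Lab φ s
  | .and φ ψ, s => csatS R Lab φ s ∧ csatS R Lab ψ s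
  | .ex π, s => ∃ σ : KPath R, σ.states 0 = s ∧ csatP R Lab π σ

/-- Satisfaction of CTL* path formulas on a path of a Kripke structure. -/
def csatP {S AP : Type} (R : S → S → Prop) (Lab : S → Set AP) : CPF AP → KPath R → Prop
  | .state φ, σ => csatS R Lab φ (σ.states 0)
  | .neg π, σ => ¬ csatP R Lab π σ
  | .and π π', σ => csatP R Lab π σ ∧ csatP R Lab π' σ
  | .next π, σ => csatP R Lab π (σ.suffix 1)
  | .unt π π', σ => ∃ j, csatP R Lab π' (σ.suffix j) ∧ ∀ i < j, csatP R Lab π (σ.suffix i)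
end

mutual
/-- ACTL* state formulas over atomic actions `Act`. -/
inductive ASF (Act : Type) : Type
  | tt : ASF Act
  | neg : ASF Act → ASF Act
  | and : ASF Act → ASF Act → ASF Act
  | ex : APF Act → ASF Act

/-- ACTL* path formulas over atomic actions `Act`. -/
inductive APF (Act : Type) : Type
  | state : ASF Act → APF Act
  | neg : APF Act → APF Act
  | and : APF Act → APF Act → APF Act
  | next : APF Act → APF Act
  | anext : Act → APF Act → APF Act
  | unt : APF Act → APF Act → APF Act
end

mutual
/-- Satisfaction of ACTL* state formulas at a state of an LTS whose transitions are
labelled by sets of atomic actions. -/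
def asatS {S Act : Type} (Tr : S → Set Act → S → Prop) : ASF Act → S → Prop
  | .tt, _ => True
  | .neg φ, s => ¬ asatS Tr φ s
  | .and φ ψ, s => asatS Tr φ s ∧ asatS Tr ψ s
  | .ex π, s => ∃ σ : LPath Tr, σ.states 0 = s ∧ asatP Tr π σ

/-- Satisfaction of ACTL* path formulas: `X_a π` holds iff the first transition of the
path is labelled with (a set containing) `a` and the suffix satisfies `π`. -/
def asatP {S Act : Type} (Tr : S → Set Act → S → Prop) : APF Act → LPath Tr → Prop
  | .state φ, σ => asatS Tr φ (σ.states 0)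
  | .neg π, σ => ¬ asatP Tr π σ
  | .and π π', σ => asatP Tr π σ ∧ asatP Tr π' σ
  | .next π, σ => asatP Tr π (σ.suffix 1)
  | .anext a π, σ => a ∈ σ.acts 0 ∧ asatP Tr π (σ.suffix 1)
  | .unt π π', σ => ∃ j, asatP Tr π' (σ.suffix j) ∧ ∀ i < j, asatP Tr π (σ.suffix i)
end

section ltsConstruction

variable {S AP : Type} (R : S → S → Prop) (Lab : S → Set AP)

/-- The fresh action `F` (the actions of `lts(K)` are `AP ∪ {F}`). -/
def Fact (AP : Type) : AP ⊕ Unit := Sum.inr ()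

/-- Transitions of `lts(K)`: `(s₀, {}, s₁)` for each transition `(s₀,s₁)` of `K`,
`(s, {F}, s̲)` and `(s̲, 𝓛(s), s)` for each state `s` of `K` (with `s̲` a fresh copy
of `s`). -/
inductive LTrans : S ⊕ S → Set (AP ⊕ Unit) → S ⊕ S → Prop
  | orig {s₀ s₁ : S} : R s₀ s₁ → LTrans (Sum.inl s₀) ∅ (Sum.inl s₁)
  | down (s : S) : LTrans (Sum.inl s) {Fact AP} (Sum.inr s)
  | up (s : S) : LTrans (Sum.inr s) (Sum.inl '' Lab s) (Sum.inl s)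

/-- The path `lts(σ)` in `lts(K)` induced by a path `σ` in `K`, running through the
original states. -/
def ltsPath (σ : KPath R) : LPath (LTrans R Lab) where
  states n := Sum.inl (σ.states n)
  acts _ := ∅
  valid n := .orig (σ.valid n)

end ltsConstruction

/-- The ACTL* state formula `∃ X_F true`. -/
def exXF (AP : Type) : ASF (AP ⊕ Unit) := .ex (.anext (Fact AP) (.state .tt))

mutual
/-- The translation `lts` from CTL* state formulas to ACTL* state formulas;
`lts(p) = ∃(X_F X_p true)`. -/
def ltsS {AP : Type} : CSF AP → ASF (AP ⊕ Unit)
  | .tt => .tt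
  | .atom p => .ex (.anext (Fact AP) (.anext (Sum.inl p) (.state .tt)))
  | .neg φ => .neg (ltsS φ)
  | .and φ ψ => .and (ltsS φ) (ltsS ψ)
  | .ex π => .ex (ltsP π)

/-- The translation `lts` from CTL* path formulas to ACTL* path formulas. -/
def ltsP {AP : Type} : CPF AP → APF (AP ⊕ Unit)
  | .state φ => .state (ltsS φ)
  | .neg π => .neg (ltsP π)
  | .and π π' => .and (ltsP π) (ltsP π')
  | .next π => .next (.and (.state (exXF AP)) (ltsP π))
  | .unt π π' => .unt (.and (.state (exXF AP)) (ltsP π)) (.and (.state (exXF AP)) (ltsP π'))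
end

/-- Let `K` be a Kripke structure, `s` a state of `K`, and `p ∈ AP` an
atomic proposition. Then `K,s ⊨ p` iff `lts(K), s ⊨ ∃(X_F X_p true)`. -/
theorem lts_atom {S AP : Type} (R : S → S → Prop) (Lab : S → Set AP)
    (s : S) (p : AP) :
    csatS R Lab (.atom p) s ↔
      asatS (LTrans R Lab)
        (.ex (.anext (Fact AP) (.anext (Sum.inl p) (.state .tt))))
        (Sum.inl s) := by

  constructor
  · intro hp
    refine ⟨⟨fun n => if Even n then Sum.inl s else Sum.inr s,
            fun n => if Even n then {Fact AP} else Sum.inl '' Lab s, fun n => ?_⟩, ?_, ?_⟩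
    · rcases Nat.even_or_odd n with h | h
      · simpa [h, Nat.even_add_one, Nat.not_even_iff_odd.mpr h.add_one] using LTrans.down s
      · simpa [Nat.not_even_iff_odd.mpr h, Nat.even_add_one, h] using LTrans.up s
    · simp
    · refine ⟨by simp [Fact], ?_, trivial⟩
      have : Sum.inl p ∈ (if Even (0+1) then ({Fact AP} : Set (AP ⊕ Unit)) else Sum.inl '' Lab s) := by
        simp only [show ¬ Even (0+1) by decide, if_false]
        exact ⟨p, hp, rfl⟩
      exact this
  · rintro ⟨σ, h0, hF, hp, -⟩
    have v0 := σ.valid 0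
    have hF' : Fact AP ∈ σ.acts 0 := hF
    have hp' : Sum.inl p ∈ σ.acts 1 := hp
    rw [h0] at v0
    generalize hA : σ.acts 0 = A at v0 hF'
    generalize hq : σ.states 1 = q at v0
    cases v0 with
    | orig h => exact absurd hF' (by simp)
    | down =>
      have v1 := σ.valid 1
      rw [hq] at v1
      generalize hB : σ.acts 1 = B at v1 hp'
      generalize hq2 : σ.states 2 = q2 at v1
      cases v1 with
      | up =>
        rcases hp' with ⟨q', hq', he⟩
        cases he
        exact hq'

end Stmt3
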